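/- GVI lower bound with Rényi regularizer, α > 1: for a loss ℓ, prior π, α > 1, and any density q (absolutely continuous w.r.t. the tempered Gibbs posterior), E_q[ℓ] + D_AR^{(α)}(q‖π) ≥ (1/α)·KL(q‖π^{αℓ}) − (1/α)·log ∫ π(θ) exp(−αℓ(θ)) dθ, where π^{αℓ}(θ) ∝ π(θ)exp(−αℓ(θ)) is the generalized Bayes posterior with loss αℓ. -/

import Mathlib

/-!
Writing `π^{αℓ} = π e^{-αℓ} / Z_α`, the divergence `KL(q‖π^{αℓ})` splits exactly as
`KL(q‖π) + α E_q[ℓ] + log Z_α`, so the claim reduces to `(α - 1) KL(q‖π) ≤ log E_q[(q/π)^{α-1}]`,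
i.e. Rényi's divergence of order `α` dominates `KL`. That is Jensen's inequality for the concave
`log` under the probability density `q`, proved here from `log x ≤ x - 1`.
-/

open MeasureTheory

section

open Real

variable {Θ : Type*} [MeasurableSpace Θ] {μ : Measure Θ}

theorem integral_mul_log_le_log_integral_mul {q f : Θ → ℝ} (hq0 : 0 ≤ᵐ[μ] q)
    (hq1 : ∫ θ, q θ ∂μ = 1) (hf : ∀ᵐ θ ∂μ, 0 < q θ → 0 < f θ)
    (hqf : Integrable (fun θ => q θ * f θ) μ)
    (hqlogf : Integrable (fun θ => q θ * log (f θ)) μ) :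
    ∫ θ, q θ * log (f θ) ∂μ ≤ log (∫ θ, q θ * f θ ∂μ) := by
  have hq : Integrable q μ := Integrable.of_integral_ne_zero (by rw [hq1]; exact one_ne_zero)
  set I := ∫ θ, q θ * f θ ∂μ
  have hqf0 : 0 ≤ᵐ[μ] fun θ => q θ * f θ := by
    filter_upwards [hq0, hf] with θ hqθ hfθ
    rcases hqθ.eq_or_lt with h | h
    · simp [← h]
    · exact (mul_pos h (hfθ h)).le
  have hIpos : 0 < I := by
    refine (integral_nonneg_of_ae hqf0).lt_of_ne fun hI => (one_ne_zero : (1 : ℝ) ≠ 0) ?_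
    have hzero := (integral_eq_zero_iff_of_nonneg_ae hqf0 hqf).1 hI.symm
    rw [← hq1]
    refine integral_eq_zero_of_ae ?_
    filter_upwards [hq0, hf, hzero] with θ hqθ hfθ hzθ
    by_contra hne
    have hpos := lt_of_le_of_ne hqθ (Ne.symm hne)
    exact (mul_pos hpos (hfθ hpos)).ne' hzθ
  -- `log (f / I) ≤ f / I - 1`, weighted by `q`
  have hpointwise : ∀ᵐ θ ∂μ, q θ * log (f θ) ≤ q θ * f θ / I - q θ + q θ * log I := by
    filter_upwards [hq0, hf] with θ hqθ hfθ
    rcases hqθ.eq_or_lt with h | h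
    · simp [← h]
    · have hlog := log_le_sub_one_of_pos (div_pos (hfθ h) hIpos)
      rw [log_div (hfθ h).ne' hIpos.ne'] at hlog
      have := mul_le_mul_of_nonneg_left hlog hqθ
      calc q θ * log (f θ) = q θ * (log (f θ) - log I) + q θ * log I := by ring
        _ ≤ q θ * (f θ / I - 1) + q θ * log I := by linarith
        _ = q θ * f θ / I - q θ + q θ * log I := by ring
  have hmono : ∫ θ, q θ * log (f θ) ∂μ ≤ ∫ θ, (q θ * f θ / I - q θ + q θ * log I) ∂μ :=
    integral_mono_ae hqlogf (((hqf.div_const I).sub hq).add (hq.mul_const _)) hpointwise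
  rwa [integral_add (by exact (hqf.div_const I).sub hq) (hq.mul_const _),
    integral_sub (hqf.div_const I) hq, integral_div, integral_mul_const, hq1,
    div_self hIpos.ne', sub_self, one_mul, zero_add] at hmono

theorem mul_integral_mul_log_div_le_log_integral_mul_rpow {q p : Θ → ℝ} (s : ℝ)
    (hq0 : 0 ≤ᵐ[μ] q) (hp0 : 0 ≤ᵐ[μ] p) (hq1 : ∫ θ, q θ ∂μ = 1)
    (hac : ∀ᵐ θ ∂μ, p θ = 0 → q θ = 0)
    (hkl : Integrable (fun θ => q θ * log (q θ / p θ)) μ)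
    (hren : Integrable (fun θ => q θ * (q θ / p θ) ^ s) μ) :
    s * ∫ θ, q θ * log (q θ / p θ) ∂μ ≤ log (∫ θ, q θ * (q θ / p θ) ^ s ∂μ) := by
  have hratio : ∀ᵐ θ ∂μ, 0 < q θ → 0 < q θ / p θ := by
    filter_upwards [hp0, hac] with θ hpθ hacθ hqθ
    exact div_pos hqθ (hpθ.lt_of_ne fun h => hqθ.ne' (hacθ h.symm))
  have hlog_rpow : (fun θ => s * (q θ * log (q θ / p θ)))
      =ᵐ[μ] fun θ => q θ * log ((q θ / p θ) ^ s) := by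
    filter_upwards [hq0, hratio] with θ hqθ hrθ
    rcases hqθ.eq_or_lt with h | h
    · simp [← h]
    · rw [log_rpow (hrθ h)]
      ring
  rw [← integral_const_mul, integral_congr_ae hlog_rpow]
  exact integral_mul_log_le_log_integral_mul hq0 hq1
    (by filter_upwards [hratio] with θ hrθ hqθ using rpow_pos_of_pos (hrθ hqθ) s)
    hren ((hkl.const_mul s).congr hlog_rpow)

theorem mul_log_div_mul_exp_neg_div {q p c Z : ℝ} (hZ : Z ≠ 0) (hac : p = 0 → q = 0) :
    q * log (q / (p * exp (-c) / Z)) = q * log (q / p) + c * q + q * log Z := by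
  rcases eq_or_ne q 0 with rfl | hq
  · simp
  have hp : p ≠ 0 := fun h => hq (hac h)
  have hratio : q / (p * exp (-c) / Z) = q / p * exp c * Z := by
    rw [exp_neg]
    field_simp
  rw [hratio, log_mul (by positivity) hZ, log_mul (div_ne_zero hq hp) (exp_ne_zero c), log_exp]
  ring

theorem integrable_mul_log_div_of_mul_exp_neg_div {q p g : Θ → ℝ} {Z : ℝ} (hZ : Z ≠ 0)
    (hq1 : ∫ θ, q θ ∂μ = 1) (hac : ∀ᵐ θ ∂μ, p θ = 0 → q θ = 0)
    (hg : Integrable (fun θ => g θ * q θ) μ)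
    (hkl : Integrable (fun θ => q θ * log (q θ / (p θ * exp (-g θ) / Z))) μ) :
    Integrable (fun θ => q θ * log (q θ / p θ)) μ := by
  have hq : Integrable q μ := Integrable.of_integral_ne_zero (by rw [hq1]; exact one_ne_zero)
  refine ((hkl.sub hg).sub (hq.mul_const (log Z))).congr ?_
  filter_upwards [hac] with θ hacθ
  simp only [Pi.sub_apply, mul_log_div_mul_exp_neg_div hZ hacθ]
  ring

theorem integral_mul_log_div_mul_exp_neg_div {q p g : Θ → ℝ} {Z : ℝ} (hZ : Z ≠ 0)
    (hq1 : ∫ θ, q θ ∂μ = 1) (hac : ∀ᵐ θ ∂μ, p θ = 0 → q θ = 0)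
    (hg : Integrable (fun θ => g θ * q θ) μ)
    (hkl : Integrable (fun θ => q θ * log (q θ / (p θ * exp (-g θ) / Z))) μ) :
    ∫ θ, q θ * log (q θ / (p θ * exp (-g θ) / Z)) ∂μ
      = (∫ θ, q θ * log (q θ / p θ) ∂μ) + (∫ θ, g θ * q θ ∂μ) + log Z := by
  have hq : Integrable q μ := Integrable.of_integral_ne_zero (by rw [hq1]; exact one_ne_zero)
  have hkl' := integrable_mul_log_div_of_mul_exp_neg_div hZ hq1 hac hg hkl
  rw [integral_congr_ae (hac.mono fun θ hacθ => mul_log_div_mul_exp_neg_div hZ hacθ),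
    integral_add (by exact hkl'.add hg) (hq.mul_const _), integral_add hkl' hg,
    integral_mul_const, hq1, one_mul]

end

theorem stmt_14_general {Θ : Type*} [MeasurableSpace Θ] (μ : Measure Θ)
    (q π ℓ : Θ → ℝ) (α : ℝ) (hα : 1 < α)
    (hq0 : ∀ θ, 0 ≤ q θ) (hπ0 : ∀ θ, 0 ≤ π θ)
    (hq1 : (∫ θ, q θ ∂μ) = 1)
    (hac : ∀ᵐ θ ∂μ, π θ = 0 → q θ = 0)
    (Zα : ℝ)
    (hZpos : 0 < Zα)
    (πα : Θ → ℝ) (hπα : πα = fun θ => π θ * Real.exp (-(α * ℓ θ)) / Zα)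
    (hl : Integrable (fun θ => ℓ θ * q θ) μ)
    (hren : Integrable (fun θ => q θ * (q θ / π θ) ^ (α - 1)) μ)
    (hklα : Integrable (fun θ => q θ * Real.log (q θ / πα θ)) μ) :
    (1 / α) * (∫ θ, q θ * Real.log (q θ / πα θ) ∂μ) - (1 / α) * Real.log Zα
      ≤ (∫ θ, ℓ θ * q θ ∂μ) +
        (1 / (α * (α - 1))) * Real.log (∫ θ, q θ * (q θ / π θ) ^ (α - 1) ∂μ) := by
  subst hπα
  have hαl : Integrable (fun θ => α * ℓ θ * q θ) μ := by
    simpa only [mul_assoc] using hl.const_mul α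
  have hkl := integrable_mul_log_div_of_mul_exp_neg_div hZpos.ne' hq1 hac hαl hklα
  have hkl_split := integral_mul_log_div_mul_exp_neg_div hZpos.ne' hq1 hac hαl hklα
  simp only [mul_assoc, integral_const_mul] at hkl_split
  have hrenyi := mul_integral_mul_log_div_le_log_integral_mul_rpow (α - 1)
    (ae_of_all _ hq0) (ae_of_all _ hπ0) hq1 hac hkl hren
  have hα0 : 0 < α := by linarith
  have hα1 : 0 < α - 1 := by linarith
  rw [hkl_split, ← sub_nonneg]
  have hgoal : 0 ≤ (Real.log (∫ θ, q θ * (q θ / π θ) ^ (α - 1) ∂μ)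
      - (α - 1) * ∫ θ, q θ * Real.log (q θ / π θ) ∂μ) / (α * (α - 1)) :=
    div_nonneg (sub_nonneg.2 hrenyi) (by positivity)
  convert hgoal using 1
  field_simp
  ring

/-- GVI lower bound with Rényi regularizer, `α > 1`:
`E_q[ℓ] + D_AR^{(α)}(q‖π) ≥ (1/α) KL(q‖π^{αℓ}) − (1/α) log ∫ π exp(−αℓ)`,
where `π^{αℓ} ∝ π·exp(−αℓ)` is the generalized Bayes posterior. -/
theorem stmt_14 {Θ : Type*} [MeasurableSpace Θ] (μ : Measure Θ)
    (q π ℓ : Θ → ℝ) (α : ℝ) (hα : 1 < α)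
    (hq0 : ∀ θ, 0 ≤ q θ) (hπ0 : ∀ θ, 0 ≤ π θ)
    (hq1 : (∫ θ, q θ ∂μ) = 1) (hπ1 : (∫ θ, π θ ∂μ) = 1)
    (hac : ∀ᵐ θ ∂μ, π θ = 0 → q θ = 0)
    (Zα : ℝ) (hZ : Zα = ∫ θ, π θ * Real.exp (-(α * ℓ θ)) ∂μ)
    (hZpos : 0 < Zα)
    (hZint : Integrable (fun θ => π θ * Real.exp (-(α * ℓ θ))) μ)
    (πα : Θ → ℝ) (hπα : πα = fun θ => π θ * Real.exp (-(α * ℓ θ)) / Zα)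
    (hl : Integrable (fun θ => ℓ θ * q θ) μ)
    (hren : Integrable (fun θ => q θ * (q θ / π θ) ^ (α - 1)) μ)
    (hklα : Integrable (fun θ => q θ * Real.log (q θ / πα θ)) μ) :
    (1 / α) * (∫ θ, q θ * Real.log (q θ / πα θ) ∂μ) - (1 / α) * Real.log Zα
      ≤ (∫ θ, ℓ θ * q θ ∂μ) +
        (1 / (α * (α - 1))) * Real.log (∫ θ, q θ * (q θ / π θ) ^ (α - 1) ∂μ) :=
  stmt_14_general μ q π ℓ α hα hq0 hπ0 hq1 hac Zα hZpos πα hπα hl hren hklα
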